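/- arXiv:2004.11099 — 2 statements merged into one kernel-verified Lean document; each statement's English description precedes it below -/
import Mathlib

section
/- A complex rank-1 matrix H of size M×N (with M,N ≥ 2) has Hankel structure (i.e., H_{k,ℓ} depends only on k+ℓ) if and only if H = c·z_M·z_N^T for some c ∈ ℂ\{0} and z ∈ ℂ, where z_N denotes the normalized vector (1, z, z², …, z^{N-1})^T / ‖(1, z, …, z^{N-1})‖₂, or H = c·e_M·e_N^T where e_N is the last standard basis vector. -/
open Matrix

/-- Normalized structured vector `(1, z, …, z^{N-1})ᵀ / ‖·‖₂`. -/
noncomputable def zvec (N : ℕ) (z : ℂ) : Fin N → ℂ :=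
  fun k => ((Real.sqrt (∑ j : Fin N, ‖z‖ ^ (2 * (j : ℕ))) : ℝ) : ℂ)⁻¹ * z ^ (k : ℕ)

/-- Last standard basis vector of `ℂ^N`. -/
def evec (N : ℕ) : Fin N → ℂ := fun k => if (k : ℕ) = N - 1 then 1 else 0

/-- A matrix is Hankel if its entries depend only on the sum of the indices. -/
def IsHankel {M N : ℕ} (H : Matrix (Fin M) (Fin N) ℂ) : Prop :=
  ∀ (k m : Fin M) (l n : Fin N), (k : ℕ) + (l : ℕ) = (m : ℕ) + (n : ℕ) → H k l = H m n

/-!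
Write `H k l = h (k + l)`. Rank one means that all `2 × 2` minors
`h (k + l) * h (m + n) - h (k + n) * h (m + l)` vanish. If `h 0 ≠ 0`, the minors through the
entry `(0, 0)` give `h (k + 1) * h 0 = h k * h 1`, so `h` is geometric with ratio `z = h 1 / h 0`
and `H` is a multiple of `z_M z_Nᵀ`. If `h 0 = 0`, the consecutive minors
`h (s + 1) ^ 2 = h s * h (s + 2)` propagate the zero up to `h (M + N - 3)`, so only the corner
entry survives and `H` is a multiple of `e_M e_Nᵀ`.
-/

namespace Matrix

variable {K m n : Type*} [Field K] [Fintype n]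

theorem exists_eq_vecMulVec_of_rank_eq_one {A : Matrix m n K} (hA : A.rank = 1) :
    ∃ (u : m → K) (v : n → K), A = vecMulVec u v := by
  rw [rank_eq_finrank_span_cols] at hA
  obtain ⟨u, -, hspan⟩ := finrank_eq_one_iff'.mp hA
  have hcol (j : n) : ∃ c : K, c • (u : m → K) = A.col j := by
    obtain ⟨c, hc⟩ := hspan ⟨A.col j, Submodule.subset_span ⟨j, rfl⟩⟩
    exact ⟨c, congrArg Subtype.val hc⟩
  choose v hv using hcol
  refine ⟨u, v, ext fun i j => ?_⟩
  rw [vecMulVec_apply, ← col_apply A j i, ← hv j, Pi.smul_apply, smul_eq_mul, mul_comm]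

theorem apply_mul_apply_eq_of_rank_eq_one {A : Matrix m n K} (hA : A.rank = 1) (i i' : m)
    (j j' : n) : A i j * A i' j' = A i j' * A i' j := by
  obtain ⟨u, v, rfl⟩ := exists_eq_vecMulVec_of_rank_eq_one hA
  simp only [vecMulVec_apply]
  ring

end Matrix

section Sequences

variable {K : Type*} [Field K]

theorem eq_mul_div_pow_of_succ_mul {f : ℕ → K} {a b : K} {n : ℕ} (ha : a ≠ 0)
    (hf : ∀ k, k + 1 < n → f (k + 1) * a = f k * b) : ∀ k < n, f k = f 0 * (b / a) ^ k
  | 0, _ => by rw [pow_zero, mul_one]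
  | k + 1, hk => by
    rw [pow_succ, ← mul_assoc, ← eq_mul_div_pow_of_succ_mul ha hf k (by omega),
      mul_div_assoc', eq_div_iff ha, hf k hk]

theorem eq_geometric_of_minors {h : ℕ → K} {M N : ℕ} (hM : 1 < M) (hN : 1 < N)
    (hminor : ∀ k < M, ∀ m < M, ∀ l < N, ∀ n < N,
      h (k + l) * h (m + n) = h (k + n) * h (m + l))
    (h0 : h 0 ≠ 0) {k l : ℕ} (hk : k < M) (hl : l < N) :
    h (k + l) = h 0 * (h 1 / h 0) ^ (k + l) := by
  have hrow : ∀ k < M, h k = h 0 * (h 1 / h 0) ^ k :=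
    eq_mul_div_pow_of_succ_mul h0 fun k hk => by
      simpa using hminor k (by omega) 0 (by omega) 1 hN 0 (by omega)
  have hcol : ∀ l < N, h l = h 0 * (h 1 / h 0) ^ l :=
    eq_mul_div_pow_of_succ_mul h0 fun l hl => by
      have := hminor 0 (by omega) 1 hM l (by omega) 0 (by omega)
      rw [add_comm 1 l] at this
      simp only [zero_add, add_zero] at this
      linear_combination -this
  have hkl := hminor k hk 0 (by omega) l hl 0 (by omega)
  simp only [add_zero, zero_add, hrow k hk, hcol l hl] at hkl
  refine mul_right_cancel₀ h0 ?_
  rw [hkl, pow_add]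
  ring

theorem sq_eq_mul_of_minors {h : ℕ → K} {M N : ℕ} (hM : 2 ≤ M) (hN : 2 ≤ N)
    (hminor : ∀ k < M, ∀ m < M, ∀ l < N, ∀ n < N,
      h (k + l) * h (m + n) = h (k + n) * h (m + l))
    (s : ℕ) (hs : s + 2 ≤ M + N - 2) : h (s + 1) ^ 2 = h s * h (s + 2) := by
  obtain ⟨k, l, hk, hl, rfl⟩ : ∃ k l, k + 1 < M ∧ l + 1 < N ∧ s = k + l :=
    ⟨min s (M - 2), s - min s (M - 2), by omega, by omega, by omega⟩
  have := hminor k (by omega) (k + 1) hk l (by omega) (l + 1) hl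
  rw [show k + 1 + (l + 1) = k + l + 2 by ring, show k + (l + 1) = k + l + 1 by ring,
    show k + 1 + l = k + l + 1 by ring] at this
  rw [this, sq]

theorem eq_zero_of_sq_eq_mul {h : ℕ → K} {n : ℕ}
    (hsq : ∀ s, s + 2 ≤ n → h (s + 1) ^ 2 = h s * h (s + 2)) (h0 : h 0 = 0) :
    ∀ s < n, h s = 0
  | 0, _ => h0
  | s + 1, hs => pow_eq_zero_iff two_ne_zero |>.mp <| by
    rw [hsq s (by omega), eq_zero_of_sq_eq_mul hsq h0 s (by omega), zero_mul]

end Sequences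

section Hankel

variable {M N : ℕ} {H : Matrix (Fin M) (Fin N) ℂ}

theorem isHankel_iff : IsHankel H ↔ ∃ h : ℕ → ℂ, ∀ k l, H k l = h (k + l) := by
  classical
  refine ⟨fun hH => ?_, fun ⟨h, hh⟩ k m l n hkl => by rw [hh, hh, hkl]⟩
  refine ⟨fun s => if hs : ∃ p : Fin M × Fin N, (p.1 : ℕ) + p.2 = s
    then H hs.choose.1 hs.choose.2 else 0, fun k l => ?_⟩
  have hs : ∃ p : Fin M × Fin N, (p.1 : ℕ) + p.2 = k + l := ⟨(k, l), rfl⟩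
  dsimp only
  rw [dif_pos hs]
  exact hH _ _ _ _ hs.choose_spec.symm

noncomputable def zvecNorm (N : ℕ) (z : ℂ) : ℝ :=
  Real.sqrt (∑ j : Fin N, ‖z‖ ^ (2 * (j : ℕ)))

theorem zvecNorm_pos (hN : 0 < N) (z : ℂ) : 0 < zvecNorm N z :=
  Real.sqrt_pos.mpr <| Finset.sum_pos' (fun _ _ => by positivity)
    ⟨⟨0, hN⟩, Finset.mem_univ _, by simp⟩

theorem vecMulVec_zvec_apply (z : ℂ) (k : Fin M) (l : Fin N) :
    vecMulVec (zvec M z) (zvec N z) k l =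
      ((zvecNorm M z * zvecNorm N z : ℝ) : ℂ)⁻¹ * z ^ ((k : ℕ) + l) := by
  simp only [vecMulVec_apply, zvec, zvecNorm, Complex.ofReal_mul, mul_inv, pow_add]
  ring

theorem vecMulVec_evec_apply (k : Fin M) (l : Fin N) :
    vecMulVec (evec M) (evec N) k l = if (k : ℕ) + l = M + N - 2 then 1 else 0 := by
  have := k.isLt
  have := l.isLt
  simp only [vecMulVec_apply, evec]
  split_ifs <;> first | rfl | omega | simp

theorem eq_smul_vecMulVec_zvec (hM : 0 < M) (hN : 0 < N) {a z : ℂ}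
    (hH : ∀ k l, H k l = a * z ^ ((k : ℕ) + l)) :
    H = (a * zvecNorm M z * zvecNorm N z) • vecMulVec (zvec M z) (zvec N z) := by
  have hMz : (zvecNorm M z : ℂ) ≠ 0 := by exact_mod_cast (zvecNorm_pos hM z).ne'
  have hNz : (zvecNorm N z : ℂ) ≠ 0 := by exact_mod_cast (zvecNorm_pos hN z).ne'
  ext k l
  rw [Matrix.smul_apply, vecMulVec_zvec_apply, hH, smul_eq_mul, Complex.ofReal_mul]
  field_simp

theorem exists_eq_smul_vecMulVec_evec (hM : 0 < M) (hN : 0 < N)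
    (hH : ∀ (k : Fin M) (l : Fin N), (k : ℕ) + l ≠ M + N - 2 → H k l = 0) :
    ∃ c : ℂ, H = c • vecMulVec (evec M) (evec N) := by
  refine ⟨H ⟨M - 1, by omega⟩ ⟨N - 1, by omega⟩, ext fun k l => ?_⟩
  rw [Matrix.smul_apply, vecMulVec_evec_apply, smul_eq_mul]
  split_ifs with hkl
  · rw [mul_one]
    congr <;> ext <;> simp <;> omega
  · rw [mul_zero, hH k l hkl]

end Hankel

theorem stmt0 (M N : ℕ) (hM : 2 ≤ M) (hN : 2 ≤ N)
    (H : Matrix (Fin M) (Fin N) ℂ) (hrank : H.rank = 1) :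
    IsHankel H ↔
      ∃ c : ℂ, c ≠ 0 ∧
        ((∃ z : ℂ, H = c • vecMulVec (zvec M z) (zvec N z)) ∨
          H = c • vecMulVec (evec M) (evec N)) := by
  constructor
  · intro hH
    obtain ⟨h, hHh⟩ := isHankel_iff.mp hH
    have hminor : ∀ k < M, ∀ m < M, ∀ l < N, ∀ n < N,
        h (k + l) * h (m + n) = h (k + n) * h (m + l) := fun k hk m hm l hl n hn => by
      simpa only [hHh] using apply_mul_apply_eq_of_rank_eq_one hrank ⟨k, hk⟩ ⟨m, hm⟩ ⟨l, hl⟩ ⟨n, hn⟩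
    suffices ∃ c : ℂ, (∃ z : ℂ, H = c • vecMulVec (zvec M z) (zvec N z)) ∨
        H = c • vecMulVec (evec M) (evec N) by
      obtain ⟨c, hc⟩ := this
      refine ⟨c, ?_, hc⟩
      rintro rfl
      simp only [zero_smul, exists_const, or_self] at hc
      simp [hc] at hrank
    by_cases h0 : h 0 = 0
    · have hvanish := eq_zero_of_sq_eq_mul (sq_eq_mul_of_minors hM hN hminor) h0
      obtain ⟨c, hc⟩ := exists_eq_smul_vecMulVec_evec (H := H) (by omega) (by omega)
        fun k l hkl => by rw [hHh, hvanish _ (by omega)]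
      exact ⟨c, Or.inr hc⟩
    · exact ⟨_, Or.inl ⟨_, eq_smul_vecMulVec_zvec (by omega) (by omega) fun k l => by
        rw [hHh, eq_geometric_of_minors hM hN hminor h0 k.isLt l.isLt]⟩⟩
  · rintro ⟨c, -, ⟨z, rfl⟩ | rfl⟩ <;> rw [isHankel_iff]
    · exact ⟨fun s => c • (((zvecNorm M z * zvecNorm N z : ℝ) : ℂ)⁻¹ * z ^ s),
        fun k l => by rw [Matrix.smul_apply, vecMulVec_zvec_apply]⟩
    · exact ⟨fun s => c • if s = M + N - 2 then 1 else 0,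
        fun k l => by rw [Matrix.smul_apply, vecMulVec_evec_apply]⟩
end

section
/- Let N ≥ 2, c > 0, D = diag(d₀, …, d_{N-1}) with d₀ < 0 and d_j > 0 for j = 1, …, N-1, and b ∈ ℝ^N. Then the matrix B = D + c·b·b^T is positive semidefinite if and only if ∑_{j=0}^{N-1} b_j²/(-d_j) ≥ 1/c. Moreover, if the inequality is strict, then B is positive definite. -/
/-!
Write `Q(x) = ∑ dⱼ xⱼ² + c (∑ bⱼ xⱼ)²` for the quadratic form of `B` and let `K = ∑_{j ≠ 0} bⱼ²/dⱼ`.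
Fixing `x₀` and minimising over the positive directions, weighted Cauchy–Schwarz
`(∑_{j ≠ 0} bⱼ xⱼ)² ≤ K ∑_{j ≠ 0} dⱼ xⱼ²` gives `Q(x) ≥ σ x₀²` with
`σ = d₀ + c b₀² / (1 + c K)`, and the bound is attained at `xⱼ = -(c b₀ / (1 + c K)) bⱼ / dⱼ`
(`x₀ = 1`). So `B` is positive semidefinite iff `σ ≥ 0`, and positive definite if `σ > 0`.
Finally `∑ bⱼ²/(-dⱼ) - 1/c` is a positive multiple of `σ`.
-/

open Matrix Finset

theorem dotProduct_diagonal_add_smul_vecMulVec_mulVec {ι : Type*} [Fintype ι] [DecidableEq ι]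
    (d b x : ι → ℝ) (c : ℝ) :
    star x ⬝ᵥ (diagonal d + c • vecMulVec b b) *ᵥ x
      = ∑ j, d j * x j ^ 2 + c * (∑ j, b j * x j) ^ 2 := by
  simp only [star_trivial, add_mulVec, smul_mulVec, vecMulVec_mulVec, dotProduct_add,
    dotProduct_smul, op_smul_eq_mul, smul_eq_mul, dotProduct_comm x b]
  simp only [dotProduct, mulVec_diagonal, sq]
  congr 1
  exact sum_congr rfl fun j _ => by ring

theorem isHermitian_diagonal_add_smul_vecMulVec {ι : Type*} [Fintype ι] [DecidableEq ι]
    (d b : ι → ℝ) (c : ℝ) : (diagonal d + c • vecMulVec b b).IsHermitian :=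
  (isHermitian_diagonal d).add ((posSemidef_vecMulVec_self_star b).isHermitian.smul (.all c))

theorem mul_sq_le_one_add_mul_mul_add_mul_sq {c K P s : ℝ} (u : ℝ) (hc : 0 ≤ c) (hK : 0 ≤ K)
    (hP : 0 ≤ P) (hs : s ^ 2 ≤ K * P) :
    c * u ^ 2 ≤ (1 + c * K) * (P + c * (u + s) ^ 2) := by
  -- `K` times `key` is `(K P - s²) + (s + c K (u + s))²`.
  have key : 0 ≤ P + c ^ 2 * K * (u + s) ^ 2 + 2 * c * (u + s) * s := by
    rcases hK.eq_or_lt with rfl | hK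
    · obtain rfl : s = 0 := by nlinarith
      simpa using hP
    · refine nonneg_of_mul_nonneg_right ?_ hK
      nlinarith [sq_nonneg (s + c * K * (u + s))]
  nlinarith [mul_le_mul_of_nonneg_left hs hc]

section OneNegativeEntry

variable {ι : Type*} [Fintype ι] [DecidableEq ι]

noncomputable def restWeight (d b : ι → ℝ) (i₀ : ι) : ℝ :=
  ∑ j ∈ univ.erase i₀, b j ^ 2 / d j

/-- The Schur complement of the block `{j ≠ i₀}` in `diagonal d + c • vecMulVec b b`
(computed with Sherman–Morrison). -/
noncomputable def schurCompl (c : ℝ) (d b : ι → ℝ) (i₀ : ι) : ℝ :=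
  d i₀ + c * b i₀ ^ 2 / (1 + c * restWeight d b i₀)

variable {c : ℝ} {d b : ι → ℝ} {i₀ : ι}

theorem restWeight_nonneg (hd : ∀ j ≠ i₀, 0 < d j) : 0 ≤ restWeight d b i₀ :=
  sum_nonneg fun j hj => div_nonneg (sq_nonneg _) (hd j (ne_of_mem_erase hj)).le

theorem sq_sum_erase_le_restWeight_mul (hd : ∀ j ≠ i₀, 0 < d j) (x : ι → ℝ) :
    (∑ j ∈ univ.erase i₀, b j * x j) ^ 2
      ≤ restWeight d b i₀ * ∑ j ∈ univ.erase i₀, d j * x j ^ 2 :=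
  sum_sq_le_sum_mul_sum_of_sq_le_mul _
    (fun j hj => div_nonneg (sq_nonneg _) (hd j (ne_of_mem_erase hj)).le)
    (fun j hj => mul_nonneg (hd j (ne_of_mem_erase hj)).le (sq_nonneg _))
    fun j hj => by
      have := (hd j (ne_of_mem_erase hj)).ne'
      exact le_of_eq (by field_simp)

theorem schurCompl_mul_sq_le (hc : 0 ≤ c) (hd : ∀ j ≠ i₀, 0 < d j) (x : ι → ℝ) :
    schurCompl c d b i₀ * x i₀ ^ 2 ≤ ∑ j, d j * x j ^ 2 + c * (∑ j, b j * x j) ^ 2 := by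
  rw [← add_sum_erase _ _ (mem_univ i₀), ← add_sum_erase _ (fun j => b j * x j) (mem_univ i₀)]
  have hK := restWeight_nonneg (b := b) hd
  have hP : 0 ≤ ∑ j ∈ univ.erase i₀, d j * x j ^ 2 :=
    sum_nonneg fun j hj => mul_nonneg (hd j (ne_of_mem_erase hj)).le (sq_nonneg _)
  have key := mul_sq_le_one_add_mul_mul_add_mul_sq (b i₀ * x i₀) hc hK hP
    (sq_sum_erase_le_restWeight_mul hd x)
  have hdiv := (div_le_iff₀' (by positivity : 0 < 1 + c * restWeight d b i₀)).2 key
  rw [schurCompl, add_mul, div_mul_eq_mul_div, mul_assoc, ← mul_pow]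
  linarith

theorem exists_quadForm_eq_schurCompl (hc : 0 ≤ c) (hd : ∀ j ≠ i₀, 0 < d j) :
    ∃ x : ι → ℝ, ∑ j, d j * x j ^ 2 + c * (∑ j, b j * x j) ^ 2 = schurCompl c d b i₀ := by
  have hK : 0 < 1 + c * restWeight d b i₀ := by
    have := restWeight_nonneg (b := b) hd; positivity
  set t := -(c * b i₀ / (1 + c * restWeight d b i₀)) with ht
  refine ⟨fun j => if j = i₀ then 1 else t * (b j / d j), ?_⟩
  have hlin : ∑ j ∈ univ.erase i₀, b j * (if j = i₀ then 1 else t * (b j / d j))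
      = t * restWeight d b i₀ := by
    rw [restWeight, mul_sum]
    refine sum_congr rfl fun j hj => ?_
    have := (hd j (ne_of_mem_erase hj)).ne'
    rw [if_neg (ne_of_mem_erase hj)]
    field_simp
  have hquad : ∑ j ∈ univ.erase i₀, d j * (if j = i₀ then 1 else t * (b j / d j)) ^ 2
      = t ^ 2 * restWeight d b i₀ := by
    rw [restWeight, mul_sum]
    refine sum_congr rfl fun j hj => ?_
    have := (hd j (ne_of_mem_erase hj)).ne'
    rw [if_neg (ne_of_mem_erase hj)]
    field_simp
  rw [← add_sum_erase _ _ (mem_univ i₀), ← add_sum_erase _ (fun j => b j * _) (mem_univ i₀),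
    hlin, hquad, schurCompl, ht]
  simp only [↓reduceIte]
  field_simp
  ring

theorem sum_sq_div_neg_sub_inv_eq (hc : 0 < c) (hd₀ : d i₀ < 0) (hd : ∀ j ≠ i₀, 0 < d j) :
    ∑ j, b j ^ 2 / -d j - 1 / c
      = (1 + c * restWeight d b i₀) / (c * -d i₀) * schurCompl c d b i₀ := by
  have hK : 1 + c * restWeight d b i₀ ≠ 0 := by
    have := restWeight_nonneg (b := b) hd; positivity
  have hrest : ∑ j ∈ univ.erase i₀, b j ^ 2 / -d j = -restWeight d b i₀ := by
    simp only [restWeight, div_neg, sum_neg_distrib]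
  have hd₀' := hd₀.ne
  rw [← add_sum_erase _ _ (mem_univ i₀), hrest, schurCompl, div_mul_eq_mul_div, mul_add,
    mul_div_cancel₀ _ hK]
  field_simp
  ring

theorem posSemidef_iff_schurCompl_nonneg (hc : 0 ≤ c) (hd : ∀ j ≠ i₀, 0 < d j) :
    (diagonal d + c • vecMulVec b b).PosSemidef ↔ 0 ≤ schurCompl c d b i₀ := by
  constructor
  · intro hB
    obtain ⟨x, hx⟩ := exists_quadForm_eq_schurCompl (b := b) hc hd
    rw [← hx, ← dotProduct_diagonal_add_smul_vecMulVec_mulVec]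
    exact hB.dotProduct_mulVec_nonneg x
  · intro hσ
    refine .of_dotProduct_mulVec_nonneg (isHermitian_diagonal_add_smul_vecMulVec d b c) fun x => ?_
    rw [dotProduct_diagonal_add_smul_vecMulVec_mulVec]
    exact (mul_nonneg hσ (sq_nonneg _)).trans (schurCompl_mul_sq_le hc hd x)

theorem posDef_of_schurCompl_pos (hc : 0 ≤ c) (hd : ∀ j ≠ i₀, 0 < d j)
    (hσ : 0 < schurCompl c d b i₀) : (diagonal d + c • vecMulVec b b).PosDef := by
  refine .of_dotProduct_mulVec_pos (isHermitian_diagonal_add_smul_vecMulVec d b c) fun x hx => ?_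
  rw [dotProduct_diagonal_add_smul_vecMulVec_mulVec]
  by_cases hx₀ : x i₀ = 0
  · obtain ⟨j, hj⟩ := Function.ne_iff.1 hx
    have hji₀ : j ≠ i₀ := by rintro rfl; exact hj hx₀
    have hpos : 0 < ∑ k ∈ univ.erase i₀, d k * x k ^ 2 :=
      sum_pos' (fun k hk => mul_nonneg (hd k (ne_of_mem_erase hk)).le (sq_nonneg _))
        ⟨j, mem_erase.2 ⟨hji₀, mem_univ j⟩, mul_pos (hd j hji₀) (sq_pos_of_ne_zero hj)⟩
    rw [← add_sum_erase _ _ (mem_univ i₀), hx₀]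
    nlinarith [mul_nonneg hc (sq_nonneg (∑ j, b j * x j))]
  · exact (mul_pos hσ (sq_pos_of_ne_zero hx₀)).trans_le (schurCompl_mul_sq_le hc hd x)

end OneNegativeEntry

/-- Positive semidefiniteness of `D + c·b·bᵀ` where `D` has exactly one
negative diagonal entry `d₀ < 0` and all other entries positive. -/
theorem stmt8 (N : ℕ) (hN : 2 ≤ N) (c : ℝ) (hc : 0 < c)
    (d : Fin N → ℝ) (b : Fin N → ℝ)
    (hd0 : d ⟨0, by omega⟩ < 0)
    (hdj : ∀ j : Fin N, j ≠ ⟨0, by omega⟩ → 0 < d j) :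
    ((Matrix.diagonal d + c • vecMulVec b b).PosSemidef ↔
      1 / c ≤ ∑ j : Fin N, b j ^ 2 / (-(d j))) ∧
    (1 / c < ∑ j : Fin N, b j ^ 2 / (-(d j)) →
      (Matrix.diagonal d + c • vecMulVec b b).PosDef) := by
  have hfactor : 0 < (1 + c * restWeight d b ⟨0, by omega⟩) / (c * -d ⟨0, by omega⟩) := by
    have := restWeight_nonneg (b := b) hdj
    have := neg_pos.2 hd0
    positivity
  have hgap := sum_sq_div_neg_sub_inv_eq (b := b) hc hd0 hdj
  refine ⟨(posSemidef_iff_schurCompl_nonneg hc.le hdj).trans ?_, fun hlt =>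
    posDef_of_schurCompl_pos hc.le hdj ?_⟩
  · rw [← mul_nonneg_iff_of_pos_left hfactor, ← hgap, sub_nonneg]
  · rwa [← sub_pos, hgap, mul_pos_iff_of_pos_left hfactor] at hlt
end
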